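/- Let ε, α, M > 0 and T > 0. Suppose φ, w, U, ψ : ℝ^d × [0,T] → ℝ are smooth, Ω-periodic in the space variable, and satisfy for all (x,t): ∂_t φ = M Δw, w = -ε² Δφ + φU + α ψ, ∂_t U = 2φ ∂_t φ, together with -Δψ(·,t) = φ(·,t) - φ̄(·,t) and ∫_Ω ψ(·,t) dx = 0 for every t. Then for every t ∈ (0,T), d/dt E(φ(·,t), U(·,t)) = -M ‖∇w(·,t)‖², where E(φ,U) = ∫_Ω ( (ε²/2)|∇φ|² + (1/4)U² + (α/2)|∇ψ|² ) dx. -/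

import Mathlib

open MeasureTheory Real Set
open scoped RealInnerProductSpace

noncomputable section
namespace PFBCP

/-- Euclidean space ℝ^d. -/
abbrev Eu (d : ℕ) := EuclideanSpace ℝ (Fin d)

/-- The periodic box Ω = [0, 2π]^d. -/
def Box (d : ℕ) : Set (Eu d) := {x | ∀ i, x i ∈ Icc (0:ℝ) (2 * π)}

/-- i-th coordinate unit vector. -/
def uvec (d : ℕ) (i : Fin d) : Eu d := EuclideanSpace.single i 1

/-- Ω-periodicity: 2π-periodic in each coordinate direction. -/
def OmegaPeriodic {d : ℕ} {F : Type*} [NormedAddCommGroup F] (f : Eu d → F) : Prop :=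
  ∀ (x : Eu d) (i : Fin d), f (x + (2 * π) • uvec d i) = f x

/-- Laplacian (componentwise for vector-valued functions). -/
def lap {d : ℕ} {F : Type*} [NormedAddCommGroup F] [NormedSpace ℝ F]
    (f : Eu d → F) (x : Eu d) : F :=
  ∑ i, fderiv ℝ (fun y => fderiv ℝ f y (uvec d i)) x (uvec d i)

/-- Divergence of a vector field. -/
def dvg {d : ℕ} (u : Eu d → Eu d) (x : Eu d) : ℝ :=
  ∑ i, fderiv ℝ u x (uvec d i) i

/-- (u·∇)v, the directional derivative of `v` along `u`. -/
def conv {d : ℕ} (u v : Eu d → Eu d) (x : Eu d) : Eu d :=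
  fderiv ℝ v x (u x)

/-- Squared Frobenius norm of the gradient of a vector field. -/
def gradVSq {d : ℕ} (u : Eu d → Eu d) (x : Eu d) : ℝ :=
  ∑ i, ∑ j, (fderiv ℝ u x (uvec d i) j) ^ 2

/-- Mean value of a scalar function over the box Ω. -/
def avg {d : ℕ} (f : Eu d → ℝ) : ℝ :=
  (volume (Box d)).toReal⁻¹ * ∫ x in Box d, f x



/-! ### Auxiliary infrastructure -/

/-- upper corner of the box -/
def bb (d : ℕ) : Fin d → ℝ := fun _ => 2 * π

lemma box_eq (d : ℕ) :
    Box d = (⇑(MeasurableEquiv.toLp 2 (Fin d → ℝ)).symm) ⁻¹' (Icc 0 (bb d)) := by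
  ext x
  simp [Box, bb, Set.mem_Icc, Pi.le_def, MeasurableEquiv.coe_toLp_symm,
    forall_and, mem_preimage]

lemma measurableSet_box (d : ℕ) : MeasurableSet (Box d) := by
  rw [box_eq]
  exact (MeasurableEquiv.toLp 2 (Fin d → ℝ)).symm.measurable measurableSet_Icc

lemma isCompact_box (d : ℕ) : IsCompact (Box d) := by
  have : Box d = (⇑(PiLp.continuousLinearEquiv 2 ℝ (fun _ : Fin d => ℝ)).symm) ''
      (Icc 0 (bb d)) := by
    rw [box_eq]
    ext x
    constructor
    · intro hx; exact ⟨_, hx, rfl⟩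
    · rintro ⟨y, hy, rfl⟩; exact hy
  rw [this]
  exact isCompact_Icc.image (PiLp.continuousLinearEquiv 2 ℝ _).symm.continuous

lemma setIntegral_box (d : ℕ) (f : Eu d → ℝ) :
    ∫ x in Box d, f x = ∫ y in Icc 0 (bb d),
      f ((MeasurableEquiv.toLp 2 (Fin d → ℝ)) y) := by
  rw [box_eq]
  have := (EuclideanSpace.volume_preserving_symm_measurableEquiv_toLp (Fin d)).setIntegral_preimage_emb
    (MeasurableEquiv.toLp 2 (Fin d → ℝ)).symm.measurableEmbedding
    (fun y => f ((MeasurableEquiv.toLp 2 (Fin d → ℝ)) y)) (Icc 0 (bb d))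
  simpa using this

lemma integrableOn_box {d : ℕ} {f : Eu d → ℝ} (hf : Continuous f) :
    IntegrableOn f (Box d) :=
  hf.continuousOn.integrableOn_compact (isCompact_box d)

/-- key step: the integral of a partial derivative of a smooth periodic function vanishes -/
lemma integral_pderiv_eq_zero {n : ℕ} {f : Eu (n+1) → ℝ}
    (hf : ContDiff ℝ (⊤ : ℕ∞) f) (hp : OmegaPeriodic f) (i : Fin (n+1)) :
    ∫ x in Box (n+1), fderiv ℝ f x (uvec (n+1) i) = 0 := by
  set CL : Eu (n+1) ≃L[ℝ] (Fin (n+1) → ℝ) :=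
    PiLp.continuousLinearEquiv 2 ℝ (fun _ : Fin (n+1) => ℝ) with hCL
  set g : (Fin (n+1) → ℝ) → ℝ := f ∘ ⇑CL.symm with hg
  have hgc : ContDiff ℝ (⊤ : ℕ∞) g := hf.comp CL.symm.contDiff
  have hgfd : ∀ y, HasFDerivAt g
      ((fderiv ℝ f (CL.symm y)).comp (CL.symm : (Fin (n+1) → ℝ) →L[ℝ] Eu (n+1))) y :=
    fun y => ((hf.differentiable (by simp) _).hasFDerivAt).comp y CL.symm.hasFDerivAt
  have hfderiv_g : ∀ y, fderiv ℝ g y (Pi.single i 1) = fderiv ℝ f (CL.symm y) (uvec (n+1) i) := by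
    intro y
    rw [(hgfd y).fderiv]
    rfl
  set F : (Fin (n+1) → ℝ) → (Fin (n+1) → ℝ) := fun y => Pi.single i (g y) with hF
  set F' : (Fin (n+1) → ℝ) → (Fin (n+1) → ℝ) →L[ℝ] (Fin (n+1) → ℝ) :=
    fun y => ContinuousLinearMap.pi (fun j => if j = i then fderiv ℝ g y else 0) with hF'
  have hgd : ∀ y, HasFDerivAt g (fderiv ℝ g y) y :=
    fun y => (hgc.differentiable (by simp) y).hasFDerivAt
  have hFd : ∀ y, HasFDerivAt F (F' y) y := by
    intro y
    rw [hF']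
    refine hasFDerivAt_pi.2 fun j => ?_
    rcases eq_or_ne j i with rfl | hji
    · simpa [hF, Pi.single_apply] using hgd y
    · simp only [if_neg hji]
      have : (fun y => F y j) = fun _ => (0:ℝ) := by
        funext z; simp [hF, Pi.single_apply, hji]
      rw [this]
      exact hasFDerivAt_const 0 y
  have hdvg : ∀ y, ∑ j, F' y (Pi.single j 1) j = fderiv ℝ g y (Pi.single i 1) := by
    intro y
    rw [Finset.sum_eq_single i]
    · simp [hF', ContinuousLinearMap.pi_apply]
    · intro j _ hji
      simp [hF', ContinuousLinearMap.pi_apply, hji]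
    · simp
  have hle : (0 : Fin (n+1) → ℝ) ≤ bb (n+1) := by
    intro j; simp only [bb, Pi.zero_apply]; positivity
  have hdiv := MeasureTheory.integral_divergence_of_hasFDerivAt_off_countable
    (a := (0 : Fin (n+1) → ℝ)) (b := bb (n+1)) hle F F' ∅ countable_empty
    (by
      have : Continuous F := by
        refine continuous_pi fun j => ?_
        rcases eq_or_ne j i with rfl | hji
        · simpa [hF, Pi.single_apply] using hgc.continuous
        · simpa [hF, Pi.single_apply, hji] using continuous_const (y := (0:ℝ))
      exact this.continuousOn)
    (fun x _ => hFd x)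
    (by
      have hc : Continuous fun y => ∑ j, F' y (Pi.single j 1) j := by
        have h1 : Continuous fun y => fderiv ℝ g y (Pi.single i 1) :=
          ((hgc.fderiv_right (m := 0) (by simp)).continuous.clm_apply continuous_const)
        simpa only [hdvg] using h1
      exact hc.continuousOn.integrableOn_compact isCompact_Icc)
  have hfaces : ∀ j : Fin (n+1),
      ((∫ x in Icc ((0:Fin (n+1) → ℝ) ∘ j.succAbove) (bb (n+1) ∘ j.succAbove),
          F (j.insertNth (bb (n+1) j) x) j) -
        ∫ x in Icc ((0:Fin (n+1) → ℝ) ∘ j.succAbove) (bb (n+1) ∘ j.succAbove),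
          F (j.insertNth ((0:Fin (n+1) → ℝ) j) x) j) = 0 := by
    intro j
    rcases eq_or_ne j i with rfl | hji
    · have hkey : ∀ x : Fin n → ℝ,
          F (j.insertNth (bb (n+1) j) x) j = F (j.insertNth ((0:Fin (n+1) → ℝ) j) x) j := by
        intro x
        have harg0 : (Fin.insertNth (α := fun _ : Fin (n+1) => ℝ) j (bb (n+1) j) x)
            = Fin.insertNth (α := fun _ : Fin (n+1) => ℝ) j ((0:Fin (n+1) → ℝ) j) x
              + (2*π) • (Pi.single j 1 : Fin (n+1) → ℝ) := by
          funext k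
          rcases eq_or_ne k j with rfl | hk
          · simp [bb, Fin.insertNth_apply_same]
          · obtain ⟨k', rfl⟩ := Fin.exists_succAbove_eq hk
            have hne : j.succAbove k' ≠ j := Fin.succAbove_ne j k'
            simp [Fin.insertNth_apply_succAbove, Pi.single_apply, hne]
        have harg : (CL.symm (j.insertNth (bb (n+1) j) x) : Eu (n+1))
            = CL.symm (j.insertNth ((0:Fin (n+1) → ℝ) j) x) + (2*π) • uvec (n+1) j := by
          rw [harg0, map_add, _root_.map_smul]
          rfl
        simp only [hF, Pi.single_eq_same, hg, Function.comp_apply]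
        rw [harg, hp]
      rw [integral_congr_ae (Filter.Eventually.of_forall (fun x => hkey x)), sub_self]
    · have hz : ∀ c : ℝ, ∀ x : Fin n → ℝ, F (j.insertNth c x) j = 0 := by
        intro c x; simp [hF, Pi.single_apply, hji]
      simp [hz]
  rw [Finset.sum_eq_zero (fun j _ => hfaces j)] at hdiv
  have : ∫ y in Icc (0:Fin (n+1) → ℝ) (bb (n+1)), fderiv ℝ g y (Pi.single i 1) = 0 := by
    rw [← hdiv]
    exact setIntegral_congr_fun measurableSet_Icc (fun y _ => (hdvg y).symm)
  rw [setIntegral_box]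
  rw [← this]
  refine setIntegral_congr_fun measurableSet_Icc (fun y _ => ?_)
  rw [hfderiv_g y]
  rfl

lemma contDiff_pderiv {X : Type*} [NormedAddCommGroup X] [NormedSpace ℝ X]
    {f : X → ℝ} (hf : ContDiff ℝ (⊤ : ℕ∞) f) (v : X) :
    ContDiff ℝ (⊤ : ℕ∞) (fun x => fderiv ℝ f x v) :=
  (hf.fderiv_right (by simp)).clm_apply contDiff_const

lemma fderiv_shift {d : ℕ} {f : Eu d → ℝ} (hf : ContDiff ℝ (⊤ : ℕ∞) f) {c : Eu d}
    (hc : ∀ x, f (x + c) = f x) (x : Eu d) : fderiv ℝ f (x + c) = fderiv ℝ f x := by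
  have h1 : HasFDerivAt (fun y => f (y + c)) (fderiv ℝ f (x + c)) x := by
    have h2 := ((hf.differentiable (by simp) (x + c)).hasFDerivAt).comp x
      ((hasFDerivAt_id x).add_const c)
    exact h2
  have h3 : (fun y => f (y + c)) = f := funext hc
  rw [h3] at h1
  exact h1.fderiv.symm

lemma periodic_pderiv {d : ℕ} {f : Eu d → ℝ} (hf : ContDiff ℝ (⊤ : ℕ∞) f)
    (hp : OmegaPeriodic f) (v : Eu d) :
    OmegaPeriodic (fun x => fderiv ℝ f x v) := by
  intro x i
  show fderiv ℝ f (x + (2*π) • uvec d i) v = fderiv ℝ f x v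
  rw [fderiv_shift hf (fun y => hp y i) x]

lemma contDiff_pderiv2 {d : ℕ} {f : Eu d → ℝ} (hf : ContDiff ℝ (⊤ : ℕ∞) f) (v w : Eu d) :
    ContDiff ℝ (⊤ : ℕ∞) (fun x => fderiv ℝ (fun y => fderiv ℝ f y v) x w) :=
  contDiff_pderiv (contDiff_pderiv hf v) w

lemma contDiff_lap {d : ℕ} {f : Eu d → ℝ} (hf : ContDiff ℝ (⊤ : ℕ∞) f) :
    ContDiff ℝ (⊤ : ℕ∞) (lap f) := by
  unfold lap
  exact ContDiff.sum fun i _ => contDiff_pderiv2 hf (uvec d i) (uvec d i)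

/-- integration by parts on the periodic box -/
lemma ibp {n : ℕ} {f g : Eu (n+1) → ℝ} (hf : ContDiff ℝ (⊤ : ℕ∞) f) (hg : ContDiff ℝ (⊤ : ℕ∞) g)
    (hpf : OmegaPeriodic f) (hpg : OmegaPeriodic g) :
    ∫ x in Box (n+1), ∑ i, fderiv ℝ f x (uvec (n+1) i) * fderiv ℝ g x (uvec (n+1) i)
      = - ∫ x in Box (n+1), f x * lap g x := by
  have key : ∀ i : Fin (n+1),
      (∫ x in Box (n+1), (fderiv ℝ f x (uvec (n+1) i) * fderiv ℝ g x (uvec (n+1) i)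
        + f x * fderiv ℝ (fun y => fderiv ℝ g y (uvec (n+1) i)) x (uvec (n+1) i))) = 0 := by
    intro i
    set h : Eu (n+1) → ℝ := fun x => f x * fderiv ℝ g x (uvec (n+1) i) with hh
    have hhc : ContDiff ℝ (⊤ : ℕ∞) h := hf.mul (contDiff_pderiv hg _)
    have hhp : OmegaPeriodic h := fun x j => by
      simp only [hh, hpf x j, periodic_pderiv hg hpg (uvec (n+1) i) x j]
    have hder : ∀ x, fderiv ℝ h x (uvec (n+1) i)
        = fderiv ℝ f x (uvec (n+1) i) * fderiv ℝ g x (uvec (n+1) i)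
          + f x * fderiv ℝ (fun y => fderiv ℝ g y (uvec (n+1) i)) x (uvec (n+1) i) := by
      intro x
      have h1 : HasFDerivAt h
          (f x • fderiv ℝ (fun y => fderiv ℝ g y (uvec (n+1) i)) x
            + fderiv ℝ g x (uvec (n+1) i) • fderiv ℝ f x) x :=
        HasFDerivAt.mul ((hf.differentiable (by simp) x).hasFDerivAt)
          (((contDiff_pderiv hg (uvec (n+1) i)).differentiable (by simp) x).hasFDerivAt)
      rw [h1.fderiv]
      simp [mul_comm]
      ring
    rw [setIntegral_congr_fun (measurableSet_box _) (fun x _ => (hder x).symm)]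
    exact integral_pderiv_eq_zero hhc hhp i
  have hint1 : ∀ i : Fin (n+1), IntegrableOn
      (fun x => fderiv ℝ f x (uvec (n+1) i) * fderiv ℝ g x (uvec (n+1) i)) (Box (n+1)) :=
    fun i => integrableOn_box (((contDiff_pderiv hf _).continuous).mul
      ((contDiff_pderiv hg _).continuous))
  have hint2 : ∀ i : Fin (n+1), IntegrableOn
      (fun x => f x * fderiv ℝ (fun y => fderiv ℝ g y (uvec (n+1) i)) x (uvec (n+1) i))
      (Box (n+1)) :=
    fun i => integrableOn_box (hf.continuous.mul ((contDiff_pderiv2 hg _ _).continuous))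
  have hsum : (∫ x in Box (n+1), ∑ i, fderiv ℝ f x (uvec (n+1) i) * fderiv ℝ g x (uvec (n+1) i))
      + ∫ x in Box (n+1), f x * lap g x = 0 := by
    have e1 : ∀ x, f x * lap g x
        = ∑ i, f x * fderiv ℝ (fun y => fderiv ℝ g y (uvec (n+1) i)) x (uvec (n+1) i) := by
      intro x; rw [lap, Finset.mul_sum]
    rw [setIntegral_congr_fun (measurableSet_box _) (fun x _ => e1 x),
      integral_finset_sum _ (fun i _ => hint1 i), integral_finset_sum _ (fun i _ => hint2 i),
      ← Finset.sum_add_distrib]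
    calc ∑ i, ((∫ x in Box (n+1), fderiv ℝ f x (uvec (n+1) i) * fderiv ℝ g x (uvec (n+1) i))
          + ∫ x in Box (n+1),
              f x * fderiv ℝ (fun y => fderiv ℝ g y (uvec (n+1) i)) x (uvec (n+1) i))
        = ∑ i : Fin (n+1), (0:ℝ) := by
          refine Finset.sum_congr rfl fun i _ => ?_
          rw [← integral_add (hint1 i) (hint2 i)]
          exact key i
      _ = 0 := by simp
  linarith

lemma hasDerivAt_slice {d : ℕ} {f : Eu d × ℝ → ℝ} (hf : ContDiff ℝ (⊤ : ℕ∞) f)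
    (x : Eu d) (t : ℝ) :
    HasDerivAt (fun s => f (x, s)) (fderiv ℝ f (x, t) (0, 1)) t := by
  have h1 : HasDerivAt (fun s : ℝ => ((x, s) : Eu d × ℝ)) ((0:Eu d), (1:ℝ)) t :=
    (hasDerivAt_const t x).prodMk (hasDerivAt_id t)
  exact ((hf.differentiable (by simp) (x, t)).hasFDerivAt).comp_hasDerivAt t h1

lemma deriv_slice {d : ℕ} {f : Eu d × ℝ → ℝ} (hf : ContDiff ℝ (⊤ : ℕ∞) f) (x : Eu d) (t : ℝ) :
    deriv (fun s => f (x, s)) t = fderiv ℝ f (x, t) (0, 1) :=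
  (hasDerivAt_slice hf x t).deriv

lemma fderiv_slice {d : ℕ} {f : Eu d × ℝ → ℝ} (hf : ContDiff ℝ (⊤ : ℕ∞) f)
    (x : Eu d) (t : ℝ) (v : Eu d) :
    fderiv ℝ (fun y => f (y, t)) x v = fderiv ℝ f (x, t) (v, 0) := by
  have h1 : HasFDerivAt (fun y : Eu d => ((y, t) : Eu d × ℝ))
      (ContinuousLinearMap.inl ℝ (Eu d) ℝ) x :=
    (hasFDerivAt_id x).prodMk (hasFDerivAt_const t x)
  have h2 : HasFDerivAt (fun y => f (y, t))
      ((fderiv ℝ f (x, t)).comp (ContinuousLinearMap.inl ℝ (Eu d) ℝ)) x :=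
    ((hf.differentiable (by simp) (x, t)).hasFDerivAt).comp x h1
  rw [h2.fderiv]
  rfl

lemma contDiff_slice {d : ℕ} {f : Eu d × ℝ → ℝ} (hf : ContDiff ℝ (⊤ : ℕ∞) f) (t : ℝ) :
    ContDiff ℝ (⊤ : ℕ∞) (fun y => f (y, t)) :=
  hf.comp (contDiff_id.prodMk contDiff_const)

/-- differentiation under the integral sign over the box -/
lemma hasDerivAt_integral_box {d : ℕ} {f : Eu d × ℝ → ℝ} (hf : ContDiff ℝ (⊤ : ℕ∞) f) (t : ℝ) :
    HasDerivAt (fun s => ∫ x in Box d, f (x, s))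
      (∫ x in Box d, fderiv ℝ f (x, t) (0, 1)) t := by
  have hK : IsCompact ((Box d) ×ˢ (Metric.closedBall t 1)) :=
    (isCompact_box d).prod (isCompact_closedBall t 1)
  have hcont : Continuous fun z : Eu d × ℝ => fderiv ℝ f z (0, 1) :=
    ((hf.fderiv_right (m := 0) (by simp)).continuous).clm_apply continuous_const
  obtain ⟨C, hC⟩ := hK.exists_bound_of_continuousOn
    (f := fun z : Eu d × ℝ => fderiv ℝ f z (0, 1)) hcont.continuousOn
  have key := hasDerivAt_integral_of_dominated_loc_of_deriv_le
    (μ := volume.restrict (Box d)) (F := fun s x => f (x, s))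
    (F' := fun s x => fderiv ℝ f (x, s) (0, 1)) (x₀ := t) (bound := fun _ => C)
    (Metric.ball_mem_nhds t one_pos)
    (Filter.Eventually.of_forall fun s =>
      ((hf.continuous.comp (continuous_id.prodMk continuous_const)).aestronglyMeasurable))
    (integrableOn_box (hf.continuous.comp (continuous_id.prodMk continuous_const)))
    ((hcont.comp (continuous_id.prodMk continuous_const)).aestronglyMeasurable)
    (by
      refine (ae_restrict_iff' (measurableSet_box d)).2 (Filter.Eventually.of_forall ?_)
      intro a ha s hs
      exact hC (a, s) ⟨ha, Metric.ball_subset_closedBall hs⟩)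
    (integrableOn_const ((isCompact_box d).measure_lt_top.ne))
    (by
      refine Filter.Eventually.of_forall fun a s _ => ?_
      exact hasDerivAt_slice hf a s)
  exact key.2

lemma fderiv_of_fderiv_apply {X : Type*} [NormedAddCommGroup X] [NormedSpace ℝ X]
    {f : X → ℝ} (hf : ContDiff ℝ (⊤ : ℕ∞) f) (z : X) (a b : X) :
    fderiv ℝ (fun w => fderiv ℝ f w a) z b = fderiv ℝ (fderiv ℝ f) z b a := by
  have hc : HasFDerivAt (fderiv ℝ f) (fderiv ℝ (fderiv ℝ f) z) z :=
    (((hf.fderiv_right (m := 1) (WithTop.coe_le_coe.2 le_top)).differentiable one_ne_zero) z).hasFDerivAt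
  have h := hc.clm_apply (hasFDerivAt_const a z)
  rw [h.fderiv]
  simp

lemma clairaut {X : Type*} [NormedAddCommGroup X] [NormedSpace ℝ X]
    {f : X → ℝ} (hf : ContDiff ℝ (⊤ : ℕ∞) f) (z : X) (a b : X) :
    fderiv ℝ (fun w => fderiv ℝ f w a) z b = fderiv ℝ (fun w => fderiv ℝ f w b) z a := by
  rw [fderiv_of_fderiv_apply hf z a b, fderiv_of_fderiv_apply hf z b a]
  exact (hf.contDiffAt.isSymmSndFDerivAt (by
    rw [minSmoothness_of_isRCLikeNormedField]; exact WithTop.coe_le_coe.2 (le_top : (2:ℕ∞) ≤ ⊤))) b a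

lemma inner_gradient {d : ℕ} (f : Eu d → ℝ) (x v : Eu d) :
    ⟪gradient f x, v⟫ = fderiv ℝ f x v := by
  unfold gradient
  exact InnerProductSpace.toDual_symm_apply

lemma norm_gradient_sq {d : ℕ} (f : Eu d → ℝ) (x : Eu d) :
    ‖gradient f x‖ ^ 2 = ∑ i, (fderiv ℝ f x (uvec d i)) ^ 2 := by
  rw [← real_inner_self_eq_norm_sq]
  have h1 : ∀ v : Eu d, ⟪v, v⟫ = ∑ i, (v i)^2 := by
    intro v
    rw [real_inner_self_eq_norm_sq, ← Real.sqrt_sq (norm_nonneg v), EuclideanSpace.norm_eq]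
    rw [Real.sqrt_sq (by positivity), Real.sq_sqrt (by positivity)]
    simp [sq_abs]
  rw [h1]
  refine Finset.sum_congr rfl fun i _ => ?_
  have : gradient f x i = ⟪gradient f x, uvec d i⟫ := by
    rw [uvec, EuclideanSpace.inner_single_right]
    simp
  rw [this, inner_gradient]

lemma periodic_tslice {d : ℕ} {f : Eu d × ℝ → ℝ} (hf : ContDiff ℝ (⊤ : ℕ∞) f)
    (hp : ∀ s : ℝ, OmegaPeriodic (fun x => f (x, s))) (t : ℝ) :
    OmegaPeriodic (fun x => fderiv ℝ f (x, t) (0, 1)) := by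
  intro x i
  show fderiv ℝ f (x + (2*π) • uvec d i, t) (0, 1) = fderiv ℝ f (x, t) (0, 1)
  have h1 : (fun s => f (x + (2*π) • uvec d i, s)) = fun s => f (x, s) :=
    funext fun s => hp s x i
  rw [← deriv_slice hf _ t, ← deriv_slice hf x t, h1]

/-- Energy dissipation law (3.7) for the IEQ-transformed PF-BCP system. -/
theorem energy_dissipation_IEQ_PFBCP {d : ℕ} (hd : d = 2 ∨ d = 3)
    (ε α M T : ℝ) (hε : 0 < ε) (hα : 0 < α) (hM : 0 < M) (hT : 0 < T)
    (φ w U ψ : Eu d × ℝ → ℝ)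
    (hφs : ContDiff ℝ (⊤ : ℕ∞) φ) (hws : ContDiff ℝ (⊤ : ℕ∞) w)
    (hUs : ContDiff ℝ (⊤ : ℕ∞) U) (hψs : ContDiff ℝ (⊤ : ℕ∞) ψ)
    (hφp : ∀ t : ℝ, OmegaPeriodic (fun x => φ (x, t)))
    (hwp : ∀ t : ℝ, OmegaPeriodic (fun x => w (x, t)))
    (hUp : ∀ t : ℝ, OmegaPeriodic (fun x => U (x, t)))
    (hψp : ∀ t : ℝ, OmegaPeriodic (fun x => ψ (x, t)))
    (heq1 : ∀ (x : Eu d), ∀ t ∈ Icc (0:ℝ) T,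
      deriv (fun s => φ (x, s)) t = M * lap (fun y => w (y, t)) x)
    (heq2 : ∀ (x : Eu d), ∀ t ∈ Icc (0:ℝ) T,
      w (x, t) = -ε ^ 2 * lap (fun y => φ (y, t)) x
        + φ (x, t) * U (x, t) + α * ψ (x, t))
    (heq3 : ∀ (x : Eu d), ∀ t ∈ Icc (0:ℝ) T,
      deriv (fun s => U (x, s)) t = 2 * φ (x, t) * deriv (fun s => φ (x, s)) t)
    (hψeq : ∀ (x : Eu d), ∀ t ∈ Icc (0:ℝ) T,
      -lap (fun y => ψ (y, t)) x = φ (x, t) - avg (fun y => φ (y, t)))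
    (hψmean : ∀ t ∈ Icc (0:ℝ) T, (∫ x in Box d, ψ (x, t)) = 0) :
    ∀ t ∈ Ioo (0:ℝ) T,
      HasDerivAt (fun s => ∫ x in Box d,
          (ε ^ 2 / 2 * ‖gradient (fun y => φ (y, s)) x‖ ^ 2
            + 1 / 4 * (U (x, s)) ^ 2
            + α / 2 * ‖gradient (fun y => ψ (y, s)) x‖ ^ 2))
        (-(M * ∫ x in Box d, ‖gradient (fun y => w (y, t)) x‖ ^ 2)) t := by
  obtain ⟨n, rfl⟩ : ∃ n, d = n + 1 := by
    rcases hd with h | h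
    · exact ⟨1, by omega⟩
    · exact ⟨2, by omega⟩
  clear hd
  intro t ht
  have htIcc : t ∈ Icc (0:ℝ) T := Ioo_subset_Icc_self ht
  -- notation
  -- time-derivative slices
  have hφts : ContDiff ℝ (⊤ : ℕ∞) (fun y : Eu (n+1) => fderiv ℝ φ (y, t) (0, 1)) :=
    contDiff_slice (contDiff_pderiv hφs ((0 : Eu (n+1)), (1:ℝ))) t
  have hψts : ContDiff ℝ (⊤ : ℕ∞) (fun y : Eu (n+1) => fderiv ℝ ψ (y, t) (0, 1)) :=
    contDiff_slice (contDiff_pderiv hψs ((0 : Eu (n+1)), (1:ℝ))) t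
  have hφTs : ContDiff ℝ (⊤ : ℕ∞) (fun y : Eu (n+1) => φ (y, t)) := contDiff_slice hφs t
  have hψTs : ContDiff ℝ (⊤ : ℕ∞) (fun y : Eu (n+1) => ψ (y, t)) := contDiff_slice hψs t
  have hwTs : ContDiff ℝ (⊤ : ℕ∞) (fun y : Eu (n+1) => w (y, t)) := contDiff_slice hws t
  have hUTs : ContDiff ℝ (⊤ : ℕ∞) (fun y : Eu (n+1) => U (y, t)) := contDiff_slice hUs t
  have hφtp : OmegaPeriodic (fun y : Eu (n+1) => fderiv ℝ φ (y, t) (0, 1)) :=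
    periodic_tslice hφs hφp t
  have hψtp : OmegaPeriodic (fun y : Eu (n+1) => fderiv ℝ ψ (y, t) (0, 1)) :=
    periodic_tslice hψs hψp t
  -- the smooth integrand
  set G : Eu (n+1) × ℝ → ℝ := fun z =>
    ε ^ 2 / 2 * ∑ i, (fderiv ℝ φ z (uvec (n+1) i, 0)) ^ 2
      + 1 / 4 * (U z) ^ 2
      + α / 2 * ∑ i, (fderiv ℝ ψ z (uvec (n+1) i, 0)) ^ 2 with hGdef
  have hGs : ContDiff ℝ (⊤ : ℕ∞) G := by
    refine ContDiff.add (ContDiff.add ?_ ?_) ?_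
    · exact contDiff_const.mul (ContDiff.sum fun i _ => (contDiff_pderiv hφs _).pow 2)
    · exact contDiff_const.mul (hUs.pow 2)
    · exact contDiff_const.mul (ContDiff.sum fun i _ => (contDiff_pderiv hψs _).pow 2)
  -- the energy functional equals the integral of G
  have hfun : ∀ s : ℝ, (∫ x in Box (n+1),
        (ε ^ 2 / 2 * ‖gradient (fun y => φ (y, s)) x‖ ^ 2
          + 1 / 4 * (U (x, s)) ^ 2
          + α / 2 * ‖gradient (fun y => ψ (y, s)) x‖ ^ 2))
      = ∫ x in Box (n+1), G (x, s) := by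
    intro s
    refine setIntegral_congr_fun (measurableSet_box _) fun x _ => ?_
    rw [norm_gradient_sq, norm_gradient_sq, hGdef]
    have e1 : ∀ i, fderiv ℝ (fun y => φ (y, s)) x (uvec (n+1) i)
        = fderiv ℝ φ (x, s) (uvec (n+1) i, 0) := fun i => fderiv_slice hφs x s _
    have e2 : ∀ i, fderiv ℝ (fun y => ψ (y, s)) x (uvec (n+1) i)
        = fderiv ℝ ψ (x, s) (uvec (n+1) i, 0) := fun i => fderiv_slice hψs x s _
    simp only [e1, e2]
  -- pointwise time derivative of G
  have hEprime : ∀ x : Eu (n+1), fderiv ℝ G (x, t) (0, 1)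
      = ε ^ 2 * ∑ i, fderiv ℝ (fun y => φ (y, t)) x (uvec (n+1) i)
          * fderiv ℝ (fun y : Eu (n+1) => fderiv ℝ φ (y, t) (0, 1)) x (uvec (n+1) i)
        + φ (x, t) * U (x, t) * fderiv ℝ φ (x, t) (0, 1)
        + α * ∑ i, fderiv ℝ (fun y => ψ (y, t)) x (uvec (n+1) i)
          * fderiv ℝ (fun y : Eu (n+1) => fderiv ℝ ψ (y, t) (0, 1)) x (uvec (n+1) i) := by
    intro x
    have ha : ∀ i : Fin (n+1), HasDerivAt (fun s => fderiv ℝ φ (x, s) (uvec (n+1) i, 0))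
        (fderiv ℝ (fun y : Eu (n+1) => fderiv ℝ φ (y, t) (0, 1)) x (uvec (n+1) i)) t := by
      intro i
      have h1 := hasDerivAt_slice (contDiff_pderiv hφs ((uvec (n+1) i : Eu (n+1)), (0:ℝ))) x t
      have h2 : fderiv ℝ (fun z : Eu (n+1) × ℝ => fderiv ℝ φ z (uvec (n+1) i, (0:ℝ))) (x, t)
            ((0 : Eu (n+1)), (1:ℝ))
          = fderiv ℝ (fun y : Eu (n+1) => fderiv ℝ φ (y, t) (0, 1)) x (uvec (n+1) i) := by
        rw [clairaut hφs (x, t) ((uvec (n+1) i : Eu (n+1)), (0:ℝ)) ((0 : Eu (n+1)), (1:ℝ))]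
        rw [fderiv_slice (contDiff_pderiv hφs ((0 : Eu (n+1)), (1:ℝ))) x t (uvec (n+1) i)]
      rwa [h2] at h1
    have hb : ∀ i : Fin (n+1), HasDerivAt (fun s => fderiv ℝ ψ (x, s) (uvec (n+1) i, 0))
        (fderiv ℝ (fun y : Eu (n+1) => fderiv ℝ ψ (y, t) (0, 1)) x (uvec (n+1) i)) t := by
      intro i
      have h1 := hasDerivAt_slice (contDiff_pderiv hψs ((uvec (n+1) i : Eu (n+1)), (0:ℝ))) x t
      have h2 : fderiv ℝ (fun z : Eu (n+1) × ℝ => fderiv ℝ ψ z (uvec (n+1) i, (0:ℝ))) (x, t)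
            ((0 : Eu (n+1)), (1:ℝ))
          = fderiv ℝ (fun y : Eu (n+1) => fderiv ℝ ψ (y, t) (0, 1)) x (uvec (n+1) i) := by
        rw [clairaut hψs (x, t) ((uvec (n+1) i : Eu (n+1)), (0:ℝ)) ((0 : Eu (n+1)), (1:ℝ))]
        rw [fderiv_slice (contDiff_pderiv hψs ((0 : Eu (n+1)), (1:ℝ))) x t (uvec (n+1) i)]
      rwa [h2] at h1
    have hU' : HasDerivAt (fun s => U (x, s)) (fderiv ℝ U (x, t) (0, 1)) t :=
      hasDerivAt_slice hUs x t
    have hUt : fderiv ℝ U (x, t) ((0 : Eu (n+1)), (1:ℝ))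
        = 2 * φ (x, t) * fderiv ℝ φ (x, t) (0, 1) := by
      rw [← deriv_slice hUs x t, heq3 x t htIcc, deriv_slice hφs x t]
    rw [hUt] at hU'
    have hG' : HasDerivAt (fun s => G (x, s))
        (ε ^ 2 / 2 * ∑ i, ((2:ℕ) * (fderiv ℝ φ (x, t) (uvec (n+1) i, 0)) ^ 1
            * fderiv ℝ (fun y : Eu (n+1) => fderiv ℝ φ (y, t) (0, 1)) x (uvec (n+1) i))
          + 1 / 4 * ((2:ℕ) * (U (x, t)) ^ 1 * (2 * φ (x, t) * fderiv ℝ φ (x, t) (0, 1)))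
          + α / 2 * ∑ i, ((2:ℕ) * (fderiv ℝ ψ (x, t) (uvec (n+1) i, 0)) ^ 1
            * fderiv ℝ (fun y : Eu (n+1) => fderiv ℝ ψ (y, t) (0, 1)) x (uvec (n+1) i))) t := by
      rw [hGdef]
      exact ((HasDerivAt.fun_sum (fun i _ => (ha i).pow 2)).const_mul _ |>.add
        ((hU'.pow 2).const_mul _)).add
        ((HasDerivAt.fun_sum (fun i _ => (hb i).pow 2)).const_mul _)
    have huniq := (hasDerivAt_slice hGs x t).unique hG'
    rw [huniq]
    have e1 : ∀ i : Fin (n+1), fderiv ℝ φ (x, t) ((uvec (n+1) i : Eu (n+1)), (0:ℝ))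
        = fderiv ℝ (fun y => φ (y, t)) x (uvec (n+1) i) :=
      fun i => (fderiv_slice hφs x t _).symm
    have e2 : ∀ i : Fin (n+1), fderiv ℝ ψ (x, t) ((uvec (n+1) i : Eu (n+1)), (0:ℝ))
        = fderiv ℝ (fun y => ψ (y, t)) x (uvec (n+1) i) :=
      fun i => (fderiv_slice hψs x t _).symm
    simp only [e1, e2, pow_one, Nat.cast_ofNat]
    have h1 : ∀ (A B : Fin (n+1) → ℝ), ∑ i, (2:ℝ) * (A i) * (B i) = 2 * ∑ i, A i * B i := by
      intro A B
      rw [Finset.mul_sum]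
      exact Finset.sum_congr rfl fun i _ => by ring
    rw [h1, h1]
    ring
  -- value of the derivative
  have hval : (∫ x in Box (n+1), fderiv ℝ G (x, t) (0, 1))
      = -(M * ∫ x in Box (n+1), ‖gradient (fun y => w (y, t)) x‖ ^ 2) := by
    rw [setIntegral_congr_fun (measurableSet_box _) (fun x _ => hEprime x)]
    -- continuity / integrability facts
    have cS1 : Continuous fun x => ∑ i, fderiv ℝ (fun y => φ (y, t)) x (uvec (n+1) i)
        * fderiv ℝ (fun y : Eu (n+1) => fderiv ℝ φ (y, t) (0, 1)) x (uvec (n+1) i) :=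
      continuous_finset_sum _ fun i _ => ((contDiff_pderiv hφTs _).continuous.mul
        (contDiff_pderiv hφts _).continuous)
    have cS2 : Continuous fun x => ∑ i, fderiv ℝ (fun y => ψ (y, t)) x (uvec (n+1) i)
        * fderiv ℝ (fun y : Eu (n+1) => fderiv ℝ ψ (y, t) (0, 1)) x (uvec (n+1) i) :=
      continuous_finset_sum _ fun i _ => ((contDiff_pderiv hψTs _).continuous.mul
        (contDiff_pderiv hψts _).continuous)
    have cB : Continuous fun x : Eu (n+1) => φ (x, t) * U (x, t) * fderiv ℝ φ (x, t) (0, 1) := by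
      have : Continuous fun x : Eu (n+1) => fderiv ℝ φ (x, t) ((0 : Eu (n+1)), (1:ℝ)) :=
        hφts.continuous
      exact (hφTs.continuous.mul hUTs.continuous).mul this
    -- split the integral
    have hsplit : (∫ x in Box (n+1),
          (ε ^ 2 * ∑ i, fderiv ℝ (fun y => φ (y, t)) x (uvec (n+1) i)
              * fderiv ℝ (fun y : Eu (n+1) => fderiv ℝ φ (y, t) (0, 1)) x (uvec (n+1) i)
            + φ (x, t) * U (x, t) * fderiv ℝ φ (x, t) (0, 1)
            + α * ∑ i, fderiv ℝ (fun y => ψ (y, t)) x (uvec (n+1) i)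
              * fderiv ℝ (fun y : Eu (n+1) => fderiv ℝ ψ (y, t) (0, 1)) x (uvec (n+1) i)))
        = ε ^ 2 * (∫ x in Box (n+1), ∑ i, fderiv ℝ (fun y => φ (y, t)) x (uvec (n+1) i)
              * fderiv ℝ (fun y : Eu (n+1) => fderiv ℝ φ (y, t) (0, 1)) x (uvec (n+1) i))
          + (∫ x in Box (n+1), φ (x, t) * U (x, t) * fderiv ℝ φ (x, t) (0, 1))
          + α * (∫ x in Box (n+1), ∑ i, fderiv ℝ (fun y => ψ (y, t)) x (uvec (n+1) i)
              * fderiv ℝ (fun y : Eu (n+1) => fderiv ℝ ψ (y, t) (0, 1)) x (uvec (n+1) i)) := by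
      rw [integral_add (integrableOn_box ((continuous_const.fun_mul cS1).fun_add cB))
          (integrableOn_box (continuous_const.fun_mul cS2)),
        integral_add (integrableOn_box (continuous_const.fun_mul cS1)) (integrableOn_box cB),
        integral_const_mul, integral_const_mul]
    rw [hsplit]
    -- integrate the gradient terms by parts
    have hA : (∫ x in Box (n+1), ∑ i, fderiv ℝ (fun y => φ (y, t)) x (uvec (n+1) i)
          * fderiv ℝ (fun y : Eu (n+1) => fderiv ℝ φ (y, t) (0, 1)) x (uvec (n+1) i))
        = - ∫ x in Box (n+1),
            fderiv ℝ φ (x, t) (0, 1) * lap (fun y => φ (y, t)) x := by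
      rw [← ibp hφts hφTs hφtp (hφp t)]
      exact setIntegral_congr_fun (measurableSet_box _) fun x _ =>
        Finset.sum_congr rfl fun i _ => mul_comm _ _
    have hC : (∫ x in Box (n+1), ∑ i, fderiv ℝ (fun y => ψ (y, t)) x (uvec (n+1) i)
          * fderiv ℝ (fun y : Eu (n+1) => fderiv ℝ ψ (y, t) (0, 1)) x (uvec (n+1) i))
        = - ∫ x in Box (n+1),
            fderiv ℝ ψ (x, t) (0, 1) * lap (fun y => ψ (y, t)) x := by
      rw [← ibp hψts hψTs hψtp (hψp t)]
      exact setIntegral_congr_fun (measurableSet_box _) fun x _ =>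
        Finset.sum_congr rfl fun i _ => mul_comm _ _
    -- ∫ ψ_t = 0
    have hψt0 : (∫ x in Box (n+1), fderiv ℝ ψ (x, t) (0, 1)) = 0 := by
      have h1 := hasDerivAt_integral_box hψs t
      have h0 : HasDerivAt (fun s => ∫ x in Box (n+1), ψ (x, s)) 0 t := by
        have heqv : (fun s : ℝ => ∫ x in Box (n+1), ψ (x, s)) =ᶠ[nhds t] fun _ => (0:ℝ) := by
          filter_upwards [Ioo_mem_nhds ht.1 ht.2] with s hs
          exact hψmean s (Ioo_subset_Icc_self hs)
        exact (hasDerivAt_const t (0:ℝ)).congr_of_eventuallyEq heqv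
      exact h1.unique h0
    -- rewrite the ψ dissipation using the Poisson equation
    have hCval : (- ∫ x in Box (n+1),
          fderiv ℝ ψ (x, t) (0, 1) * lap (fun y => ψ (y, t)) x)
        = ∫ x in Box (n+1), fderiv ℝ ψ (x, t) (0, 1) * φ (x, t) := by
      rw [← integral_neg]
      have e1 : ∀ x : Eu (n+1), -(fderiv ℝ ψ (x, t) (0, 1) * lap (fun y => ψ (y, t)) x)
          = fderiv ℝ ψ (x, t) (0, 1) * φ (x, t)
            - avg (fun y => φ (y, t)) * fderiv ℝ ψ (x, t) (0, 1) := by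
        intro x
        have h2 := hψeq x t htIcc
        have : -(fderiv ℝ ψ (x, t) (0, 1) * lap (fun y => ψ (y, t)) x)
            = fderiv ℝ ψ (x, t) (0, 1) * (-lap (fun y => ψ (y, t)) x) := by ring
        rw [this, h2]
        ring
      rw [setIntegral_congr_fun (measurableSet_box _) fun x _ => e1 x,
        integral_sub (integrableOn_box (hψts.continuous.fun_mul hφTs.continuous))
          (integrableOn_box (continuous_const.fun_mul hψts.continuous)),
        integral_const_mul, hψt0]
      ring
    -- the symmetry trick : ∫ ψ_t φ = ∫ φ_t ψ
    have hsym : (∫ x in Box (n+1), fderiv ℝ ψ (x, t) (0, 1) * φ (x, t))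
        = ∫ x in Box (n+1), fderiv ℝ φ (x, t) (0, 1) * ψ (x, t) := by
      have hPs : ContDiff ℝ (⊤ : ℕ∞) (fun z : Eu (n+1) × ℝ => φ (z.1, t) * ψ z) :=
        (hφTs.comp contDiff_fst).mul hψs
      have hQs : ContDiff ℝ (⊤ : ℕ∞) (fun z : Eu (n+1) × ℝ => φ z * ψ (z.1, t)) :=
        hφs.mul (hψTs.comp contDiff_fst)
      have hP := hasDerivAt_integral_box hPs t
      have hQ := hasDerivAt_integral_box hQs t
      have hPval : ∀ x : Eu (n+1),
          fderiv ℝ (fun z : Eu (n+1) × ℝ => φ (z.1, t) * ψ z) (x, t) (0, 1)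
            = φ (x, t) * fderiv ℝ ψ (x, t) (0, 1) := by
        intro x
        have h1 := hasDerivAt_slice hPs x t
        have h2 : HasDerivAt (fun s => φ (x, t) * ψ (x, s))
            (φ (x, t) * fderiv ℝ ψ (x, t) (0, 1)) t :=
          (hasDerivAt_slice hψs x t).const_mul _
        exact h1.unique h2
      have hQval : ∀ x : Eu (n+1),
          fderiv ℝ (fun z : Eu (n+1) × ℝ => φ z * ψ (z.1, t)) (x, t) (0, 1)
            = fderiv ℝ φ (x, t) (0, 1) * ψ (x, t) := by
        intro x
        have h1 := hasDerivAt_slice hQs x t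
        have h2 : HasDerivAt (fun s => φ (x, s) * ψ (x, t))
            (fderiv ℝ φ (x, t) (0, 1) * ψ (x, t)) t :=
          (hasDerivAt_slice hφs x t).mul_const _
        exact h1.unique h2
      rw [setIntegral_congr_fun (measurableSet_box _)
        (fun x _ => hPval x)] at hP
      rw [setIntegral_congr_fun (measurableSet_box _)
        (fun x _ => hQval x)] at hQ
      -- the two time-slid functionals agree on Icc 0 T by symmetry of the Dirichlet form
      have hPQ : ∀ s ∈ Icc (0:ℝ) T,
          (∫ x in Box (n+1), φ (x, t) * ψ (x, s)) = ∫ x in Box (n+1), φ (x, s) * ψ (x, t) := by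
        intro s hs
        have h1 := ibp (contDiff_slice hψs s) hψTs (hψp s) (hψp t)
        have h2 := ibp hψTs (contDiff_slice hψs s) (hψp t) (hψp s)
        have hL : (∫ x in Box (n+1), φ (x, t) * ψ (x, s))
            = - ∫ x in Box (n+1), ψ (x, s) * lap (fun y => ψ (y, t)) x := by
          have e1 : ∀ x, φ (x, t) * ψ (x, s)
              = -(ψ (x, s) * lap (fun y => ψ (y, t)) x)
                + avg (fun y => φ (y, t)) * ψ (x, s) := by
            intro x
            linear_combination (-ψ (x, s)) * (hψeq x t htIcc)
          rw [setIntegral_congr_fun (measurableSet_box _) (fun x _ => e1 x),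
            integral_add (integrableOn_box
              (((contDiff_slice hψs s).continuous.fun_mul (contDiff_lap hψTs).continuous).fun_neg))
              (integrableOn_box (continuous_const.fun_mul (contDiff_slice hψs s).continuous)),
            integral_neg, integral_const_mul, hψmean s hs]
          ring
        have hR : (∫ x in Box (n+1), φ (x, s) * ψ (x, t))
            = - ∫ x in Box (n+1), ψ (x, t) * lap (fun y => ψ (y, s)) x := by
          have e1 : ∀ x, φ (x, s) * ψ (x, t)
              = -(ψ (x, t) * lap (fun y => ψ (y, s)) x)
                + avg (fun y => φ (y, s)) * ψ (x, t) := by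
            intro x
            linear_combination (-ψ (x, t)) * (hψeq x s hs)
          rw [setIntegral_congr_fun (measurableSet_box _) (fun x _ => e1 x),
            integral_add (integrableOn_box
              ((hψTs.continuous.fun_mul (contDiff_lap (contDiff_slice hψs s)).continuous).fun_neg))
              (integrableOn_box (continuous_const.fun_mul hψTs.continuous)),
            integral_neg, integral_const_mul, hψmean t htIcc]
          ring
        rw [hL, hR, ← h1, ← h2]
        exact setIntegral_congr_fun (measurableSet_box _) fun x _ =>
          Finset.sum_congr rfl fun i _ => mul_comm _ _
      -- transfer the derivative through the eventual equality
      have hev : (fun s => ∫ x in Box (n+1), φ (x, t) * ψ (x, s))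
          =ᶠ[nhds t] fun s => ∫ x in Box (n+1), φ (x, s) * ψ (x, t) := by
        filter_upwards [Ioo_mem_nhds ht.1 ht.2] with s hs
        exact hPQ s (Ioo_subset_Icc_self hs)
      have hQ2 : HasDerivAt (fun s => ∫ x in Box (n+1), φ (x, t) * ψ (x, s))
          (∫ x in Box (n+1), fderiv ℝ φ (x, t) (0, 1) * ψ (x, t)) t :=
        hQ.congr_of_eventuallyEq hev
      have := hP.unique hQ2
      rw [← this]
      exact setIntegral_congr_fun (measurableSet_box _) fun x _ => mul_comm _ _
    -- assemble
    rw [hA, hC, hCval, hsym]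
    -- combine into a single integral against the chemical potential w
    have e2 : ∀ x : Eu (n+1), w (x, t) * fderiv ℝ φ (x, t) (0, 1)
        = -ε ^ 2 * (fderiv ℝ φ (x, t) (0, 1) * lap (fun y => φ (y, t)) x)
          + φ (x, t) * U (x, t) * fderiv ℝ φ (x, t) (0, 1)
          + α * (fderiv ℝ φ (x, t) (0, 1) * ψ (x, t)) := by
      intro x
      rw [heq2 x t htIcc]
      ring
    have hwint : (∫ x in Box (n+1), w (x, t) * fderiv ℝ φ (x, t) (0, 1))
        = -ε ^ 2 * (∫ x in Box (n+1),
              fderiv ℝ φ (x, t) (0, 1) * lap (fun y => φ (y, t)) x)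
          + (∫ x in Box (n+1), φ (x, t) * U (x, t) * fderiv ℝ φ (x, t) (0, 1))
          + α * ∫ x in Box (n+1), fderiv ℝ φ (x, t) (0, 1) * ψ (x, t) := by
      rw [setIntegral_congr_fun (measurableSet_box _) (fun x _ => e2 x),
        integral_add (integrableOn_box ((continuous_const.fun_mul
            (hφts.continuous.fun_mul (contDiff_lap hφTs).continuous)).fun_add cB))
          (integrableOn_box (continuous_const.fun_mul
            (hφts.continuous.fun_mul hψTs.continuous))),
        integral_add (integrableOn_box (continuous_const.fun_mul
            (hφts.continuous.fun_mul (contDiff_lap hφTs).continuous)))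
          (integrableOn_box cB),
        integral_const_mul, integral_const_mul]
    have hstep1 : ε ^ 2 * (- ∫ x in Box (n+1),
            fderiv ℝ φ (x, t) (0, 1) * lap (fun y => φ (y, t)) x)
          + (∫ x in Box (n+1), φ (x, t) * U (x, t) * fderiv ℝ φ (x, t) (0, 1))
          + α * (∫ x in Box (n+1), fderiv ℝ φ (x, t) (0, 1) * ψ (x, t))
        = ∫ x in Box (n+1), w (x, t) * fderiv ℝ φ (x, t) (0, 1) := by
      rw [hwint]
      ring
    rw [hstep1]
    -- use the PDE for φ_t and integrate by parts once more
    have e3 : ∀ x : Eu (n+1), w (x, t) * fderiv ℝ φ (x, t) (0, 1)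
        = M * (w (x, t) * lap (fun y => w (y, t)) x) := by
      intro x
      rw [← deriv_slice hφs x t, heq1 x t htIcc]
      ring
    rw [setIntegral_congr_fun (measurableSet_box _) (fun x _ => e3 x), integral_const_mul]
    have hibpw := ibp hwTs hwTs (hwp t) (hwp t)
    have hgrad : ∀ x : Eu (n+1), (∑ i, fderiv ℝ (fun y => w (y, t)) x (uvec (n+1) i)
          * fderiv ℝ (fun y => w (y, t)) x (uvec (n+1) i))
        = ‖gradient (fun y => w (y, t)) x‖ ^ 2 := by
      intro x
      rw [norm_gradient_sq]
      exact Finset.sum_congr rfl fun i _ => (sq _).symm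
    rw [setIntegral_congr_fun (measurableSet_box _) (fun x _ => hgrad x)] at hibpw
    have : (∫ x in Box (n+1), w (x, t) * lap (fun y => w (y, t)) x)
        = - ∫ x in Box (n+1), ‖gradient (fun y => w (y, t)) x‖ ^ 2 := by
      linarith
    rw [this]
    ring

  have hD' := hasDerivAt_integral_box hGs t
  rw [hval] at hD'
  have hfe : (fun s => ∫ x in Box (n+1), G (x, s))
      = fun s => ∫ x in Box (n+1),
        (ε ^ 2 / 2 * ‖gradient (fun y => φ (y, s)) x‖ ^ 2
          + 1 / 4 * (U (x, s)) ^ 2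
          + α / 2 * ‖gradient (fun y => ψ (y, s)) x‖ ^ 2) :=
    funext fun s => (hfun s).symm
  rw [hfe] at hD'
  exact hD'


end PFBCP
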